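/- For all integers n ≥ 3 and 1 ≤ m ≤ ⌊(n−1)/2⌋, the generalised Petersen graph P(n,m) is a super totally antimagic total graph, i.e. there exists a bijection f : V ∪ E → {1,...,5n} with f(V)={1,...,2n} such that all edge-weights are pairwise distinct and all vertex-weights are pairwise distinct. -/
import Mathlib


open Sum

/-- The weight of an edge `e` under a total labeling `f` of the graph `G`:
the label of `e` plus the labels of its two endpoints. -/
noncomputable def edgeWt {V : Type*} (G : SimpleGraph V) (f : V ⊕ G.edgeSet → ℕ)
    (e : G.edgeSet) : ℕ :=
  f (inr e) + ∑ᶠ (v : V) (_ : v ∈ (e : Sym2 V)), f (inl v)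

/-- The weight of a vertex `v` under a total labeling `f` of the graph `G`:
the label of `v` plus the labels of all edges incident with `v`. -/
noncomputable def vertexWt {V : Type*} (G : SimpleGraph V) (f : V ⊕ G.edgeSet → ℕ)
    (v : V) : ℕ :=
  f (inl v) + ∑ᶠ (e : G.edgeSet) (_ : v ∈ (e : Sym2 V)), f (inr e)

/-- The generalised Petersen graph `P(n,m)`, with outer vertices `u_i = inl i` and
inner vertices `v_i = inr i` (`i` running over `Fin n`), outer cycle edges `u_i u_{i+1}`,
spokes `u_i v_i`, and inner edges `v_i v_{i+m}` (indices mod `n`). -/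
def petersen (n m : ℕ) : SimpleGraph (Fin n ⊕ Fin n) :=
  SimpleGraph.fromRel (fun a b =>
    (∃ p q : Fin n, ((p : ℕ) + 1) % n = (q : ℕ) ∧ a = inl p ∧ b = inl q) ∨
    (∃ p q : Fin n, ((p : ℕ) + m) % n = (q : ℕ) ∧ a = inr p ∧ b = inr q) ∨
    (∃ p : Fin n, a = inl p ∧ b = inr p))

/- ### Auxiliary material -/

private lemma add_mod_ne {n k : ℕ} (hk1 : 1 ≤ k) (hkn : k < n) {i : ℕ} (hi : i < n) :
    (i + k) % n ≠ i := by
  intro h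
  have h2 : (i + k) % n = (i + 0) % n := by
    rw [h, Nat.add_zero, Nat.mod_eq_of_lt hi]
  have h3 : k % n = 0 % n := Nat.ModEq.add_left_cancel' i h2
  rw [Nat.mod_eq_of_lt hkn, Nat.zero_mod] at h3
  omega

private lemma swap_sum_lt {α : Type*} [Fintype α] [DecidableEq α] (c s : α → ℕ) {e e' : α}
    (hne : e ≠ e') (h1 : c e < c e') (h2 : s e' < s e) :
    ∑ x, c x * s x < ∑ x, c (Equiv.swap e e' x) * s x := by
  have hsub : ({e, e'} : Finset α) ⊆ Finset.univ := Finset.subset_univ _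
  rw [← Finset.sum_sdiff hsub, ← Finset.sum_sdiff hsub]
  have hcongr : ∑ x ∈ Finset.univ \ {e, e'}, c (Equiv.swap e e' x) * s x
      = ∑ x ∈ Finset.univ \ {e, e'}, c x * s x := by
    refine Finset.sum_congr rfl fun x hx => ?_
    simp only [Finset.mem_sdiff, Finset.mem_insert, Finset.mem_singleton, not_or] at hx
    rw [Equiv.swap_apply_of_ne_of_ne hx.2.1 hx.2.2]
  rw [hcongr]
  refine Nat.add_lt_add_left ?_ _
  rw [Finset.sum_pair hne, Finset.sum_pair hne, Equiv.swap_apply_left, Equiv.swap_apply_right]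
  nlinarith

/-- The total labeling associated to a pair of label-orderings. -/
private def labF {V E : Type*} (n : ℕ) (p : (V ≃ Fin (2 * n)) × (E ≃ Fin (3 * n))) :
    V ⊕ E → ℕ :=
  Sum.elim (fun v => (p.1 v : ℕ) + 1) (fun e => 2 * n + 1 + (p.2 e : ℕ))

section general

variable {V : Type*} [Fintype V] [DecidableEq V] (G : SimpleGraph V) [Fintype G.edgeSet] (n : ℕ)

/-- Sum of labels of the endpoints of an edge. -/
private def sEF (p : (V ≃ Fin (2 * n)) × (G.edgeSet ≃ Fin (3 * n))) (e : G.edgeSet) : ℕ :=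
  ∑ v ∈ Finset.univ.filter (fun v => v ∈ (e : Sym2 V)), labF n p (inl v)

/-- Sum of labels of the edges incident with a vertex. -/
private def sVF (p : (V ≃ Fin (2 * n)) × (G.edgeSet ≃ Fin (3 * n))) (v : V) : ℕ :=
  ∑ e ∈ Finset.univ.filter (fun e : G.edgeSet => v ∈ (e : Sym2 V)), labF n p (inr e)

/-- The potential functional to be maximized. -/
private def PhiF (p : (V ≃ Fin (2 * n)) × (G.edgeSet ≃ Fin (3 * n))) : ℕ :=
  ∑ e : G.edgeSet, labF n p (inr e) * sEF G n p e

/-- Any graph on `2n` vertices with `3n` edges is super totally antimagic total. -/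
private theorem general_TAT (hV : Fintype.card V = 2 * n)
    (hE : Fintype.card G.edgeSet = 3 * n) :
    ∃ f : V ⊕ G.edgeSet → ℕ,
      Set.BijOn f Set.univ (Set.Icc 1 (5 * n)) ∧
      Set.BijOn (fun v => f (inl v)) Set.univ (Set.Icc 1 (2 * n)) ∧
      Function.Injective (edgeWt G f) ∧
      Function.Injective (vertexWt G f) := by
  haveI : Nonempty ((V ≃ Fin (2 * n)) × (G.edgeSet ≃ Fin (3 * n))) :=
    ⟨⟨Fintype.equivFinOfCardEq hV, Fintype.equivFinOfCardEq hE⟩⟩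
  obtain ⟨p, hp⟩ := Finite.exists_max (PhiF G n)
  -- computation of the weights
  have hfinE : ∀ (q : (V ≃ Fin (2 * n)) × (G.edgeSet ≃ Fin (3 * n))) (e : G.edgeSet),
      edgeWt G (labF n q) e = labF n q (inr e) + sEF G n q e := by
    intro q e
    simp only [edgeWt, sEF]
    congr 1
    refine finsum_cond_eq_sum_of_cond_iff _ fun {x} _ => ?_
    simp
  have hfinV : ∀ (q : (V ≃ Fin (2 * n)) × (G.edgeSet ≃ Fin (3 * n))) (v : V),
      vertexWt G (labF n q) v = labF n q (inl v) + sVF G n q v := by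
    intro q v
    simp only [vertexWt, sVF]
    congr 1
    refine finsum_cond_eq_sum_of_cond_iff _ fun {x} _ => ?_
    simp
  -- the vertex form of the potential
  have hPhiV : ∀ q : (V ≃ Fin (2 * n)) × (G.edgeSet ≃ Fin (3 * n)),
      PhiF G n q = ∑ v : V, labF n q (inl v) * sVF G n q v := by
    intro q
    have hcomm : ∀ (x : G.edgeSet) (y : V),
        x ∈ (Finset.univ : Finset G.edgeSet) ∧
          y ∈ Finset.univ.filter (fun v => v ∈ (x : Sym2 V)) ↔
        x ∈ Finset.univ.filter (fun e : G.edgeSet => y ∈ (e : Sym2 V)) ∧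
          y ∈ (Finset.univ : Finset V) := by
      intro x y; simp [Finset.mem_filter]
    simp only [PhiF, sEF, Finset.mul_sum]
    rw [Finset.sum_comm' hcomm]
    refine Finset.sum_congr rfl fun v _ => ?_
    simp only [sVF, Finset.mul_sum]
    exact Finset.sum_congr rfl fun e _ => mul_comm _ _
  refine ⟨labF n p, ?_, ?_, ?_, ?_⟩
  · -- global bijectivity
    refine ⟨?_, ?_, ?_⟩
    · rintro (v | e) -
      · have := (p.1 v).isLt
        simp only [labF, Sum.elim_inl, Set.mem_Icc]
        omega
      · have := (p.2 e).isLt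
        simp only [labF, Sum.elim_inr, Set.mem_Icc]
        omega
    · rintro (v | e) - (w | e') - h
      · have h' : (p.1 v : ℕ) = (p.1 w : ℕ) := by
          simpa [labF] using h
        rw [p.1.injective (Fin.val_injective h')]
      · have h1 := (p.1 v).isLt
        simp only [labF, Sum.elim_inl, Sum.elim_inr] at h
        omega
      · have h1 := (p.1 w).isLt
        simp only [labF, Sum.elim_inl, Sum.elim_inr] at h
        omega
      · have h' : (p.2 e : ℕ) = (p.2 e' : ℕ) := by
          simpa [labF] using h
        rw [p.2.injective (Fin.val_injective h')]
    · intro k hk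
      simp only [Set.mem_Icc] at hk
      rcases le_or_gt k (2 * n) with h | h
      · refine ⟨inl (p.1.symm ⟨k - 1, by omega⟩), trivial, ?_⟩
        simp only [labF, Sum.elim_inl, Equiv.apply_symm_apply]
        omega
      · refine ⟨inr (p.2.symm ⟨k - (2 * n + 1), by omega⟩), trivial, ?_⟩
        simp only [labF, Sum.elim_inr, Equiv.apply_symm_apply]
        omega
  · -- vertex bijectivity
    refine ⟨?_, ?_, ?_⟩
    · rintro v -
      have := (p.1 v).isLt
      simp only [labF, Sum.elim_inl, Set.mem_Icc]
      omega
    · rintro v - w - h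
      have h' : (p.1 v : ℕ) = (p.1 w : ℕ) := by simpa [labF] using h
      exact p.1.injective (Fin.val_injective h')
    · intro k hk
      simp only [Set.mem_Icc] at hk
      refine ⟨p.1.symm ⟨k - 1, by omega⟩, trivial, ?_⟩
      simp only [labF, Sum.elim_inl, Equiv.apply_symm_apply]
      omega
  · -- edge antimagic
    have key : ∀ e e' : G.edgeSet, e ≠ e' → ((p.2 e : ℕ) < (p.2 e' : ℕ)) →
        labF n p (inr e) + sEF G n p e ≠ labF n p (inr e') + sEF G n p e' := by
      intro e e' hne hlt hW
      have h1 : labF n p (inr e) = 2 * n + 1 + (p.2 e : ℕ) := rfl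
      have h2 : labF n p (inr e') = 2 * n + 1 + (p.2 e' : ℕ) := rfl
      have hs : sEF G n p e' < sEF G n p e := by omega
      have hclt : (fun x => labF n p (inr x)) e < (fun x => labF n p (inr x)) e' := by
        simp only [labF, Sum.elim_inr]
        omega
      have hswap := swap_sum_lt (fun x => labF n p (inr x)) (sEF G n p) hne hclt hs
      set p' : (V ≃ Fin (2 * n)) × (G.edgeSet ≃ Fin (3 * n)) :=
        (p.1, (Equiv.swap e e').trans p.2) with hp'def
      have hPhip' : PhiF G n p' = ∑ x : G.edgeSet,
          labF n p (inr (Equiv.swap e e' x)) * sEF G n p x := by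
        simp only [PhiF]
        refine Finset.sum_congr rfl fun x _ => ?_
        congr 1
      have hlt2 : PhiF G n p < PhiF G n p' := by
        rw [hPhip']
        simpa only [PhiF] using hswap
      exact absurd (hp p') (Nat.not_le.mpr hlt2)
    intro e e' hW
    by_contra hne
    rw [hfinE p e, hfinE p e'] at hW
    rcases Nat.lt_trichotomy (p.2 e : ℕ) (p.2 e' : ℕ) with h | h | h
    · exact key e e' hne h hW
    · exact hne (p.2.injective (Fin.val_injective h))
    · exact key e' e (Ne.symm hne) h hW.symm
  · -- vertex antimagic
    have key : ∀ v w : V, v ≠ w → ((p.1 v : ℕ) < (p.1 w : ℕ)) →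
        labF n p (inl v) + sVF G n p v ≠ labF n p (inl w) + sVF G n p w := by
      intro v w hne hlt hW
      have h1 : labF n p (inl v) = (p.1 v : ℕ) + 1 := rfl
      have h2 : labF n p (inl w) = (p.1 w : ℕ) + 1 := rfl
      have hs : sVF G n p w < sVF G n p v := by omega
      have hclt : (fun x => labF n p (inl x)) v < (fun x => labF n p (inl x)) w := by
        simp only [labF, Sum.elim_inl]
        omega
      have hswap := swap_sum_lt (fun x => labF n p (inl x)) (sVF G n p) hne hclt hs
      set p' : (V ≃ Fin (2 * n)) × (G.edgeSet ≃ Fin (3 * n)) :=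
        ((Equiv.swap v w).trans p.1, p.2) with hp'def
      have hPhip' : PhiF G n p' = ∑ x : V,
          labF n p (inl (Equiv.swap v w x)) * sVF G n p x := by
        rw [hPhiV p']
        refine Finset.sum_congr rfl fun x _ => ?_
        congr 1
      have hlt2 : PhiF G n p < PhiF G n p' := by
        rw [hPhip', hPhiV p]
        exact hswap
      exact absurd (hp p') (Nat.not_le.mpr hlt2)
    intro v w hW
    by_contra hne
    rw [hfinV p v, hfinV p w] at hW
    rcases Nat.lt_trichotomy (p.1 v : ℕ) (p.1 w : ℕ) with h | h | h
    · exact key v w hne h hW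
    · exact hne (p.1.injective (Fin.val_injective h))
    · exact key w v (Ne.symm hne) h hW.symm

end general

/- ### Counting the edges of the generalised Petersen graph -/

private def pAdd (n k : ℕ) (hn : 0 < n) (i : Fin n) : Fin n :=
  ⟨((i : ℕ) + k) % n, Nat.mod_lt _ hn⟩

private def pF (n m : ℕ) (hn : 0 < n) : Fin n ⊕ Fin n ⊕ Fin n → Sym2 (Fin n ⊕ Fin n) :=
  Sum.elim (fun i => s(inl i, inl (pAdd n 1 hn i)))
    (Sum.elim (fun i => s(inl i, inr i)) (fun i => s(inr i, inr (pAdd n m hn i))))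

private lemma petersen_card_edges (n m : ℕ) (hn : 3 ≤ n) (hm1 : 1 ≤ m) (hm2 : m ≤ (n - 1) / 2)
    [Fintype (petersen n m).edgeSet] :
    Fintype.card (petersen n m).edgeSet = 3 * n := by
  have hmn : m < n := by omega
  have h2m : 2 * m ≤ n - 1 := by omega
  have npos : 0 < n := by omega
  have hmem : ∀ x, pF n m npos x ∈ (petersen n m).edgeSet := by
    rintro (i | i | i)
    · simp only [pF, Sum.elim_inl]
      rw [SimpleGraph.mem_edgeSet]
      refine (SimpleGraph.fromRel_adj _ _ _).mpr ⟨?_, Or.inl (Or.inl ⟨i, pAdd n 1 npos i, rfl, rfl, rfl⟩)⟩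
      intro hcon
      exact add_mod_ne (le_refl 1) (by omega) i.isLt
        (congrArg Fin.val (Sum.inl.inj hcon)).symm
    · simp only [pF, Sum.elim_inr, Sum.elim_inl]
      rw [SimpleGraph.mem_edgeSet]
      exact (SimpleGraph.fromRel_adj _ _ _).mpr
        ⟨by simp, Or.inl (Or.inr (Or.inr ⟨i, rfl, rfl⟩))⟩
    · simp only [pF, Sum.elim_inr]
      rw [SimpleGraph.mem_edgeSet]
      refine (SimpleGraph.fromRel_adj _ _ _).mpr
        ⟨?_, Or.inl (Or.inr (Or.inl ⟨i, pAdd n m npos i, rfl, rfl, rfl⟩))⟩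
      intro hcon
      exact add_mod_ne hm1 hmn i.isLt (congrArg Fin.val (Sum.inr.inj hcon)).symm
  have hFinj : Function.Injective (pF n m npos) := by
    intro x y h
    rcases x with i | i | i <;> rcases y with j | j | j <;>
      simp only [pF, Sum.elim_inl, Sum.elim_inr, Sym2.eq_iff, Sum.inl.injEq, Sum.inr.injEq,
        reduceCtorEq, false_and, and_false, or_false, false_or, or_self, and_self] at h
    · -- outer/outer
      obtain ⟨h1, _⟩ | ⟨h1, h2⟩ := h
      · rw [h1]
      · exfalso
        have hv1 : (i : ℕ) = ((j : ℕ) + 1) % n := congrArg Fin.val h1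
        have hv2 : ((i : ℕ) + 1) % n = (j : ℕ) := congrArg Fin.val h2
        rw [hv1, Nat.mod_add_mod] at hv2
        have hv3 : ((j : ℕ) + 2) % n = (j : ℕ) := by
          rw [show (j : ℕ) + 2 = (j : ℕ) + 1 + 1 by ring]; exact hv2
        exact add_mod_ne (by norm_num) (by omega) j.isLt hv3
    · -- spoke/spoke
      rw [h]
    · -- inner/inner
      obtain ⟨h1, _⟩ | ⟨h1, h2⟩ := h
      · rw [h1]
      · exfalso
        have hv1 : (i : ℕ) = ((j : ℕ) + m) % n := congrArg Fin.val h1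
        have hv2 : ((i : ℕ) + m) % n = (j : ℕ) := congrArg Fin.val h2
        rw [hv1, Nat.mod_add_mod] at hv2
        have hv3 : ((j : ℕ) + 2 * m) % n = (j : ℕ) := by
          rw [show (j : ℕ) + 2 * m = (j : ℕ) + m + m by ring]; exact hv2
        exact add_mod_ne (by omega) (by omega) j.isLt hv3
  have hsurj : ∀ e, e ∈ (petersen n m).edgeSet → ∃ x, pF n m npos x = e := by
    intro e
    induction e using Sym2.ind with
    | _ a b =>
      intro he
      rw [SimpleGraph.mem_edgeSet] at he
      obtain ⟨-, hr | hr⟩ := (SimpleGraph.fromRel_adj _ a b).mp he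
      · rcases hr with ⟨pp, qq, hpq, rfl, rfl⟩ | ⟨pp, qq, hpq, rfl, rfl⟩ | ⟨pp, rfl, rfl⟩
        · refine ⟨inl pp, ?_⟩
          have hq : pAdd n 1 npos pp = qq := Fin.val_injective hpq
          simp only [pF, Sum.elim_inl]
          rw [hq]
        · refine ⟨inr (inr pp), ?_⟩
          have hq : pAdd n m npos pp = qq := Fin.val_injective hpq
          simp only [pF, Sum.elim_inr]
          rw [hq]
        · exact ⟨inr (inl pp), by simp only [pF, Sum.elim_inr, Sum.elim_inl]⟩
      · rcases hr with ⟨pp, qq, hpq, rfl, rfl⟩ | ⟨pp, qq, hpq, rfl, rfl⟩ | ⟨pp, rfl, rfl⟩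
        · refine ⟨inl pp, ?_⟩
          have hq : pAdd n 1 npos pp = qq := Fin.val_injective hpq
          simp only [pF, Sum.elim_inl]
          rw [hq, Sym2.eq_swap]
        · refine ⟨inr (inr pp), ?_⟩
          have hq : pAdd n m npos pp = qq := Fin.val_injective hpq
          simp only [pF, Sum.elim_inr]
          rw [hq, Sym2.eq_swap]
        · exact ⟨inr (inl pp), by
            simp only [pF, Sum.elim_inr, Sum.elim_inl]
            rw [Sym2.eq_swap]⟩
  have hbij : Function.Bijective
      (fun x => (⟨pF n m npos x, hmem x⟩ : (petersen n m).edgeSet)) := by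
    constructor
    · intro x y hxy
      exact hFinj (congrArg Subtype.val hxy)
    · rintro ⟨e, he⟩
      obtain ⟨x, hx⟩ := hsurj e he
      exact ⟨x, Subtype.ext hx⟩
  have hcard := Fintype.card_of_bijective hbij
  rw [← hcard]
  simp only [Fintype.card_sum, Fintype.card_fin]
  omega

/-- For all `n ≥ 3` and `1 ≤ m ≤ ⌊(n-1)/2⌋` the generalised Petersen graph `P(n,m)`
is a super totally antimagic total graph. -/
theorem petersen_super_TAT (n m : ℕ) (hn : 3 ≤ n) (hm1 : 1 ≤ m) (hm2 : m ≤ (n - 1) / 2) :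
    ∃ f : (Fin n ⊕ Fin n) ⊕ (petersen n m).edgeSet → ℕ,
      Set.BijOn f Set.univ (Set.Icc 1 (5 * n)) ∧
      Set.BijOn (fun v => f (inl v)) Set.univ (Set.Icc 1 (2 * n)) ∧
      Function.Injective (edgeWt (petersen n m) f) ∧
      Function.Injective (vertexWt (petersen n m) f) := by
  haveI : Fintype (petersen n m).edgeSet := Fintype.ofFinite _
  have hV : Fintype.card (Fin n ⊕ Fin n) = 2 * n := by
    simp only [Fintype.card_sum, Fintype.card_fin]
    omega
  exact general_TAT (petersen n m) n hV (petersen_card_edges n m hn hm1 hm2)
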